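/- Every constant angle spacelike surface is ruled: let (x, ξ) be a constant angle spacelike parametrized surface on Ω ⊆ ℝ² with hyperbolic angle θ ≠ 0 relative to a vector U with ⟨U,U⟩ = −1. Then through every point of the surface there passes a straight-line segment contained in the surface: for every p ∈ Ω there exist a nonzero vector d ∈ ℝ³ and ε > 0 such that x(p) + s·d belongs to the image of x for all s ∈ (−ε, ε); moreover d may be taken parallel to the tangential projection U + ⟨U, ξ(p)⟩·ξ(p) of U. -/

import Mathlib

/-- The Lorentzian inner product on Minkowski 3-space. -/
def ml (u v : Fin 3 → ℝ) : ℝ := u 0 * v 0 + u 1 * v 1 - u 2 * v 2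

lemma ml_symm (u v : Fin 3 → ℝ) : ml u v = ml v u := by simp only [ml]; ring
lemma ml_add_right (z u v : Fin 3 → ℝ) : ml z (u + v) = ml z u + ml z v := by simp [ml]; ring
lemma ml_smul_right (c : ℝ) (z v : Fin 3 → ℝ) : ml z (c • v) = c * ml z v := by simp [ml]; ring
lemma ml_sub_right (z u v : Fin 3 → ℝ) : ml z (u - v) = ml z u - ml z v := by simp [ml]; ring
lemma ml_zero_right (z : Fin 3 → ℝ) : ml z 0 = 0 := by simp [ml]

/-- `ml` as a continuous bilinear map. -/
noncomputable def mlB : (Fin 3 → ℝ) →L[ℝ] (Fin 3 → ℝ) →L[ℝ] ℝ :=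
  LinearMap.mkContinuous₂
    (LinearMap.mk₂ ℝ ml
      (fun u u' v => by simp [ml, Pi.add_apply]; ring)
      (fun c u v => by simp [ml, Pi.smul_apply, smul_eq_mul]; ring)
      (fun u v v' => by simp [ml, Pi.add_apply]; ring)
      (fun c u v => by simp [ml, Pi.smul_apply, smul_eq_mul]; ring))
    3
    (by
      intro u v
      have hu : ∀ i, |u i| ≤ ‖u‖ := fun i => by
        simpa [Real.norm_eq_abs] using norm_le_pi_norm u i
      have hv : ∀ i, |v i| ≤ ‖v‖ := fun i => by
        simpa [Real.norm_eq_abs] using norm_le_pi_norm v i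
      have h0 : |u 0 * v 0| ≤ ‖u‖ * ‖v‖ := by
        rw [abs_mul]; exact mul_le_mul (hu 0) (hv 0) (abs_nonneg _) (norm_nonneg _)
      have h1 : |u 1 * v 1| ≤ ‖u‖ * ‖v‖ := by
        rw [abs_mul]; exact mul_le_mul (hu 1) (hv 1) (abs_nonneg _) (norm_nonneg _)
      have h2 : |u 2 * v 2| ≤ ‖u‖ * ‖v‖ := by
        rw [abs_mul]; exact mul_le_mul (hu 2) (hv 2) (abs_nonneg _) (norm_nonneg _)
      simp only [LinearMap.mk₂_apply, Real.norm_eq_abs, ml]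
      rw [abs_le]
      constructor <;>
        nlinarith [le_abs_self (u 0 * v 0), neg_abs_le (u 0 * v 0),
          le_abs_self (u 1 * v 1), neg_abs_le (u 1 * v 1),
          le_abs_self (u 2 * v 2), neg_abs_le (u 2 * v 2)])

@[simp] lemma mlB_apply (u v : Fin 3 → ℝ) : mlB u v = ml u v := rfl

section
variable {G : Type*} [NormedAddCommGroup G] [NormedSpace ℝ G]

lemma hasFDerivAt_ml {f g : G → (Fin 3 → ℝ)} {f' g' : G →L[ℝ] (Fin 3 → ℝ)} {q : G}
    (hf : HasFDerivAt f f' q) (hg : HasFDerivAt g g' q) :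
    HasFDerivAt (fun y => ml (f y) (g y))
      (mlB.precompR G (f q) g' + mlB.precompL G f' (g q)) q := by
  have := mlB.hasFDerivAt_of_bilinear hf hg
  simpa using this

lemma ml_deriv_apply {a b : Fin 3 → ℝ} {f' g' : G →L[ℝ] (Fin 3 → ℝ)} (w : G) :
    (mlB.precompR G a g' + mlB.precompL G f' b) w = ml a (g' w) + ml (f' w) b := by
  simp [ContinuousLinearMap.precompR, ContinuousLinearMap.precompL]

lemma fderiv_zero_of_const_on {F : G → ℝ} {D : G →L[ℝ] ℝ} {Ω : Set G} (hΩ : IsOpen Ω)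
    {q : G} (hq : q ∈ Ω) (hF : HasFDerivAt F D q) {c : ℝ} (hconst : ∀ r ∈ Ω, F r = c) :
    D = 0 := by
  have h2 : HasFDerivAt F (0 : G →L[ℝ] ℝ) q := by
    apply (hasFDerivAt_const c q).congr_of_eventuallyEq
    filter_upwards [hΩ.mem_nhds hq] with r hr
    exact hconst r hr
  exact hF.unique h2

end

lemma eq_zero_of_ml_forall {z : Fin 3 → ℝ} (h : ∀ v, ml z v = 0) : z = 0 := by
  have h0 := h ![z 0, z 1, -(z 2)]
  simp [ml] at h0
  funext i
  fin_cases i <;> simp <;> nlinarith [sq_nonneg (z 0), sq_nonneg (z 1), sq_nonneg (z 2)]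

lemma lin_indep_triple {xu xv xi : Fin 3 → ℝ}
    (h : ∀ a b c : ℝ, a • xu + b • xv + c • xi = 0 → a = 0 ∧ b = 0 ∧ c = 0) :
    LinearIndependent ℝ ![xu, xv, xi] := by
  rw [Fintype.linearIndependent_iff]
  intro g hg
  have := h (g 0) (g 1) (g 2) (by simpa [Fin.sum_univ_three] using hg)
  intro i; fin_cases i <;> simp [this.1, this.2.1, this.2.2]

lemma orth_triple {xu xv xi z : Fin 3 → ℝ}
    (hind : LinearIndependent ℝ ![xu, xv, xi])
    (h1 : ml z xu = 0) (h2 : ml z xv = 0) (h3 : ml z xi = 0) : z = 0 := by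
  have htop : Submodule.span ℝ (Set.range ![xu, xv, xi]) = ⊤ :=
    hind.span_eq_top_of_card_eq_finrank (by simp [Module.finrank_fin_fun])
  apply eq_zero_of_ml_forall
  intro v
  have hv : v ∈ Submodule.span ℝ (Set.range ![xu, xv, xi]) := htop ▸ Submodule.mem_top
  induction hv using Submodule.span_induction with
  | mem v hv =>
    rcases hv with ⟨i, rfl⟩
    fin_cases i <;> simpa
  | zero => simp [ml]
  | add u v _ _ hu hv => rw [ml_add_right, hu, hv, add_zero]
  | smul c v _ hv => rw [ml_smul_right, hv, mul_zero]

lemma repr_triple {xu xv xi : Fin 3 → ℝ} (hind : LinearIndependent ℝ ![xu, xv, xi])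
    (T : Fin 3 → ℝ) : ∃ a b c : ℝ, T = a • xu + b • xv + c • xi := by
  let B := basisOfLinearIndependentOfCardEqFinrank hind (by simp [Module.finrank_fin_fun])
  have hs := B.sum_repr T
  have hB : ∀ i, B i = ![xu, xv, xi] i := fun i => by
    rw [coe_basisOfLinearIndependentOfCardEqFinrank]
  rw [Fin.sum_univ_three, hB 0, hB 1, hB 2] at hs
  simp only [Matrix.cons_val_zero, Matrix.cons_val_one, Matrix.head_cons,
    Matrix.cons_val_two, Matrix.tail_cons] at hs
  exact ⟨B.repr T 0, B.repr T 1, B.repr T 2, hs.symm⟩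

/-- The Euclidean dot product on `ℝ³`. -/
def ed (u v : Fin 3 → ℝ) : ℝ := u 0 * v 0 + u 1 * v 1 + u 2 * v 2

lemma ed_pos {u : Fin 3 → ℝ} (h : u ≠ 0) : 0 < ed u u := by
  have h0 : 0 ≤ ed u u := by
    simp only [ed]; nlinarith [sq_nonneg (u 0), sq_nonneg (u 1), sq_nonneg (u 2)]
  rcases h0.lt_or_eq with h1 | h1
  · exact h1
  · exfalso; apply h
    have h2 : u 0 * u 0 + u 1 * u 1 + u 2 * u 2 = 0 := by simpa [ed] using h1.symm
    funext i; fin_cases i <;> simp <;> nlinarith [sq_nonneg (u 0), sq_nonneg (u 1), sq_nonneg (u 2)]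

lemma det_pos {xu xv : Fin 3 → ℝ}
    (hind : ∀ a b : ℝ, a • xu + b • xv = 0 → a = 0 ∧ b = 0) :
    0 < ed xu xu * ed xv xv - ed xu xv ^ 2 := by
  have hxu : xu ≠ 0 := by
    intro h
    have := hind 1 0 (by simp [h])
    exact one_ne_zero this.1
  have hE : 0 < ed xu xu := ed_pos hxu
  have hv' : (-(ed xu xv)) • xu + (ed xu xu) • xv ≠ 0 := by
    intro h
    have := hind _ _ h
    exact hE.ne' this.2
  have hpos : 0 < ed ((-(ed xu xv)) • xu + (ed xu xu) • xv)
      ((-(ed xu xv)) • xu + (ed xu xu) • xv) := ed_pos hv'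
  have hexp : ed ((-(ed xu xv)) • xu + (ed xu xu) • xv)
      ((-(ed xu xv)) • xu + (ed xu xu) • xv)
      = ed xu xu * (ed xu xu * ed xv xv - ed xu xv ^ 2) := by
    simp only [ed, Pi.add_apply, Pi.smul_apply, smul_eq_mul]
    ring
  rw [hexp] at hpos
  rcases mul_pos_iff.mp hpos with ⟨_, h2⟩ | ⟨h1, _⟩
  · linarith
  · linarith

lemma cramer {xu xv T : Fin 3 → ℝ} {a b : ℝ} (hT : T = a • xu + b • xv)
    (hdt : ed xu xu * ed xv xv - ed xu xv ^ 2 ≠ 0) :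
    (ed xv xv * ed xu T - ed xu xv * ed xv T) / (ed xu xu * ed xv xv - ed xu xv ^ 2) = a ∧
    (ed xu xu * ed xv T - ed xu xv * ed xu T) / (ed xu xu * ed xv xv - ed xu xv ^ 2) = b := by
  have h1 : ed xu T = a * ed xu xu + b * ed xu xv := by
    subst hT; simp only [ed, Pi.add_apply, Pi.smul_apply, smul_eq_mul]; ring
  have h2 : ed xv T = a * ed xu xv + b * ed xv xv := by
    subst hT; simp only [ed, Pi.add_apply, Pi.smul_apply, smul_eq_mul]; ring
  constructor <;> rw [div_eq_iff hdt] <;> rw [h1, h2] <;> ring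

lemma ml_expand (u v : Fin 3 → ℝ) (c : ℝ) :
    ml (u - c • v) (u - c • v) = ml u u - 2 * c * ml u v + c ^ 2 * ml v v := by
  simp only [ml, Pi.sub_apply, Pi.smul_apply, smul_eq_mul]; ring

lemma const_of_deriv_zero {F : Type*} [NormedAddCommGroup F] [NormedSpace ℝ F]
    {h : ℝ → F} {ε : ℝ} (hε : 0 < ε)
    (hd : ∀ s ∈ Set.Ioo (-ε) ε, HasDerivAt h 0 s) :
    ∀ s ∈ Set.Ioo (-ε) ε, h s = h 0 := by
  intro s hs
  have h0 : (0 : ℝ) ∈ Set.Ioo (-ε) ε := by constructor <;> simp [hε]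
  refine (convex_Ioo (-ε) ε).is_const_of_fderivWithin_eq_zero
    (fun t ht => ((hd t ht).differentiableAt).differentiableWithinAt) ?_ hs h0
  intro t ht
  rw [fderivWithin_of_isOpen isOpen_Ioo ht]
  have h1 : HasFDerivAt h (0 : ℝ →L[ℝ] F) t := by
    have h2 := (hd t ht).hasFDerivAt
    rwa [show (ContinuousLinearMap.toSpanSingleton ℝ (0 : F)) = 0 by
      ext; simp] at h2
  exact h1.fderiv

/-- The (in general only locally well-behaved) vector field on the parameter domain whose image
under `D x` is the tangential field `T`. -/
noncomputable def Wfun (x : ℝ × ℝ → Fin 3 → ℝ) (T : ℝ × ℝ → Fin 3 → ℝ) (q : ℝ × ℝ) : ℝ × ℝ :=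
  ((ed (fderiv ℝ x q (0, 1)) (fderiv ℝ x q (0, 1)) * ed (fderiv ℝ x q (1, 0)) (T q)
      - ed (fderiv ℝ x q (1, 0)) (fderiv ℝ x q (0, 1)) * ed (fderiv ℝ x q (0, 1)) (T q)) /
    (ed (fderiv ℝ x q (1, 0)) (fderiv ℝ x q (1, 0)) * ed (fderiv ℝ x q (0, 1)) (fderiv ℝ x q (0, 1))
      - ed (fderiv ℝ x q (1, 0)) (fderiv ℝ x q (0, 1)) ^ 2),
   (ed (fderiv ℝ x q (1, 0)) (fderiv ℝ x q (1, 0)) * ed (fderiv ℝ x q (0, 1)) (T q)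
      - ed (fderiv ℝ x q (1, 0)) (fderiv ℝ x q (0, 1)) * ed (fderiv ℝ x q (1, 0)) (T q)) /
    (ed (fderiv ℝ x q (1, 0)) (fderiv ℝ x q (1, 0)) * ed (fderiv ℝ x q (0, 1)) (fderiv ℝ x q (0, 1))
      - ed (fderiv ℝ x q (1, 0)) (fderiv ℝ x q (0, 1)) ^ 2))

/-- Every constant angle spacelike surface is ruled: through every point of the surface there
passes a straight-line segment contained in the image of the surface, whose direction `d` may
be taken parallel to the tangential projection `U + ⟨U, ξ(p)⟩ ξ(p)` of `U`. -/
theorem constant_angle_surface_ruled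
    (Ω : Set (ℝ × ℝ)) (hΩ : IsOpen Ω)
    (x ξ : ℝ × ℝ → Fin 3 → ℝ)
    (hx : ContDiffOn ℝ (⊤ : ℕ∞) x Ω) (hξ : ContDiffOn ℝ (⊤ : ℕ∞) ξ Ω)
    (himm : ∀ p ∈ Ω, Function.Injective (fderiv ℝ x p))
    (hunit : ∀ p ∈ Ω, ml (ξ p) (ξ p) = -1)
    (hperp : ∀ p ∈ Ω, ∀ w : ℝ × ℝ, ml (ξ p) (fderiv ℝ x p w) = 0)
    (U : Fin 3 → ℝ) (hU : ml U U = -1)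
    (θ : ℝ) (hθ0 : 0 ≤ θ) (hθ : θ ≠ 0)
    (hangle : ∀ p ∈ Ω, ml (ξ p) U = -Real.cosh θ) :
    ∀ p ∈ Ω, ∃ d : Fin 3 → ℝ, d ≠ 0 ∧
      (∃ c : ℝ, d = c • (U + ml U (ξ p) • ξ p)) ∧
      ∃ ε : ℝ, 0 < ε ∧ ∀ s ∈ Set.Ioo (-ε) ε, x p + s • d ∈ x '' Ω := by
  intro p hp
  classical
  set T : ℝ × ℝ → Fin 3 → ℝ := fun q => U - Real.cosh θ • ξ q with hTdef
  have hmem : ∀ q ∈ Ω, Ω ∈ nhds q := fun q hq => hΩ.mem_nhds hq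
  have hxD : ∀ q ∈ Ω, HasFDerivAt x (fderiv ℝ x q) q := fun q hq =>
    ((hx.contDiffAt (hmem q hq)).differentiableAt (by simp)).hasFDerivAt
  have hξD : ∀ q ∈ Ω, HasFDerivAt ξ (fderiv ℝ ξ q) q := fun q hq =>
    ((hξ.contDiffAt (hmem q hq)).differentiableAt (by simp)).hasFDerivAt
  have hx'C : ContDiffOn ℝ 1 (fun r => fderiv ℝ x r) Ω := hx.fderiv_of_isOpen hΩ (WithTop.coe_le_coe.mpr le_top)
  have hx'D : ∀ q ∈ Ω, HasFDerivAt (fun r => fderiv ℝ x r)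
      (fderiv ℝ (fun r => fderiv ℝ x r) q) q := fun q hq =>
    ((hx'C.contDiffAt (hmem q hq)).differentiableAt one_ne_zero).hasFDerivAt
  -- linear independence of the two tangent vectors
  have hind2 : ∀ q ∈ Ω, ∀ a b : ℝ,
      a • fderiv ℝ x q (1, 0) + b • fderiv ℝ x q (0, 1) = 0 → a = 0 ∧ b = 0 := by
    intro q hq a b hab
    have hcomb : fderiv ℝ x q (a, b) = a • fderiv ℝ x q (1, 0) + b • fderiv ℝ x q (0, 1) := by
      have h : ((a, b) : ℝ × ℝ) = a • ((1 : ℝ), (0 : ℝ)) + b • ((0 : ℝ), (1 : ℝ)) := by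
        simp [Prod.ext_iff]
      rw [h, map_add, map_smul, map_smul]
    have h0 : fderiv ℝ x q (a, b) = fderiv ℝ x q 0 := by
      rw [hcomb, hab, map_zero]
    have h1 := himm q hq h0
    exact ⟨congrArg Prod.fst h1, congrArg Prod.snd h1⟩
  have hind3 : ∀ q ∈ Ω,
      LinearIndependent ℝ ![fderiv ℝ x q (1, 0), fderiv ℝ x q (0, 1), ξ q] := by
    intro q hq
    apply lin_indep_triple
    intro a b c habc
    have h1 : ml (ξ q) (a • fderiv ℝ x q (1, 0) + b • fderiv ℝ x q (0, 1) + c • ξ q) = 0 := by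
      rw [habc, ml_zero_right]
    rw [ml_add_right, ml_add_right, ml_smul_right, ml_smul_right, ml_smul_right,
      hperp q hq, hperp q hq, hunit q hq] at h1
    have hc : c = 0 := by linarith
    subst hc
    have h2 : a • fderiv ℝ x q (1, 0) + b • fderiv ℝ x q (0, 1) = 0 := by
      simpa using habc
    exact ⟨(hind2 q hq a b h2).1, (hind2 q hq a b h2).2, rfl⟩
  -- differentiating the unit condition
  have hAξ : ∀ q ∈ Ω, ∀ w, ml (fderiv ℝ ξ q w) (ξ q) = 0 := by
    intro q hq w
    have hD := hasFDerivAt_ml (hξD q hq) (hξD q hq)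
    have h0 := fderiv_zero_of_const_on hΩ hq hD (c := -1) (fun r hr => hunit r hr)
    have h1 := DFunLike.congr_fun h0 w
    rw [ml_deriv_apply] at h1
    simp only [ContinuousLinearMap.zero_apply] at h1
    have h2 := ml_symm (ξ q) (fderiv ℝ ξ q w)
    linarith
  -- differentiating the angle condition
  have hAU : ∀ q ∈ Ω, ∀ w, ml (fderiv ℝ ξ q w) U = 0 := by
    intro q hq w
    have hD := hasFDerivAt_ml (hξD q hq) (hasFDerivAt_const U q)
    have h0 := fderiv_zero_of_const_on hΩ hq hD (c := -Real.cosh θ)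
      (fun r hr => hangle r hr)
    have h1 := DFunLike.congr_fun h0 w
    rw [ml_deriv_apply] at h1
    simpa [ml_zero_right] using h1
  -- symmetry of the mixed derivative expression
  have hsym : ∀ q ∈ Ω, ∀ v w,
      ml (fderiv ℝ ξ q v) (fderiv ℝ x q w) = ml (fderiv ℝ ξ q w) (fderiv ℝ x q v) := by
    intro q hq v w
    set x'' := fderiv ℝ (fun r => fderiv ℝ x r) q with hx''def
    have hsecond : ∀ v w, x'' v w = x'' w v := by
      intro v w
      refine second_derivative_symmetric_of_eventually (f := x) ?_ (hx'D q hq) v w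
      filter_upwards [hmem q hq] with r hr
      exact hxD r hr
    have happ : ∀ u : ℝ × ℝ, HasFDerivAt (fun r => fderiv ℝ x r u)
        ((ContinuousLinearMap.apply ℝ (Fin 3 → ℝ) u).comp x'') q := fun u =>
      (ContinuousLinearMap.apply ℝ (Fin 3 → ℝ) u).hasFDerivAt.comp q (hx'D q hq)
    have key : ∀ u v : ℝ × ℝ, ml (fderiv ℝ ξ q v) (fderiv ℝ x q u) = - ml (ξ q) (x'' v u) := by
      intro u v
      have hD := hasFDerivAt_ml (hξD q hq) (happ u)
      have h0 := fderiv_zero_of_const_on hΩ hq hD (c := 0) (fun r hr => hperp r hr u)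
      have h1 := DFunLike.congr_fun h0 v
      rw [ml_deriv_apply] at h1
      simp only [ContinuousLinearMap.zero_apply, ContinuousLinearMap.coe_comp',
        Function.comp_apply, ContinuousLinearMap.apply_apply] at h1
      linarith
    rw [key w v, key v w, hsecond v w]
  -- the key lemma: the shape operator kills the direction mapped to T
  have hkey : ∀ q ∈ Ω, ∀ wst : ℝ × ℝ, fderiv ℝ x q wst = T q → fderiv ℝ ξ q wst = 0 := by
    intro q hq wst hwst
    have hzT : ∀ w : ℝ × ℝ, ml (fderiv ℝ ξ q w) (T q) = 0 := by
      intro w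
      rw [hTdef]
      simp only []
      rw [ml_sub_right, ml_smul_right, hAU q hq w, hAξ q hq w]
      ring
    have h1 : ml (fderiv ℝ ξ q wst) (fderiv ℝ x q (1, 0)) = 0 := by
      rw [hsym q hq wst (1, 0), hwst]
      exact hzT (1, 0)
    have h2 : ml (fderiv ℝ ξ q wst) (fderiv ℝ x q (0, 1)) = 0 := by
      rw [hsym q hq wst (0, 1), hwst]
      exact hzT (0, 1)
    exact orth_triple (hind3 q hq) h1 h2 (hAξ q hq wst)
  -- T is tangent: it lies in the span of xu and xv
  have hTspan : ∀ q ∈ Ω, ∃ a b : ℝ,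
      T q = a • fderiv ℝ x q (1, 0) + b • fderiv ℝ x q (0, 1) := by
    intro q hq
    obtain ⟨a, b, c, habc⟩ := repr_triple (hind3 q hq) (T q)
    have h1 : ml (ξ q) (T q) = 0 := by
      rw [hTdef]
      simp only []
      rw [ml_sub_right, ml_smul_right, hangle q hq, hunit q hq]
      ring
    have h2 : ml (ξ q) (T q) = -c := by
      rw [habc, ml_add_right, ml_add_right, ml_smul_right, ml_smul_right, ml_smul_right,
        hperp q hq, hperp q hq, hunit q hq]
      ring
    have hc : c = 0 := by rw [h1] at h2; linarith
    exact ⟨a, b, by rw [habc, hc]; simp⟩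
  -- the determinant is positive on Ω
  have hdt : ∀ q ∈ Ω, 0 < ed (fderiv ℝ x q (1, 0)) (fderiv ℝ x q (1, 0)) *
      ed (fderiv ℝ x q (0, 1)) (fderiv ℝ x q (0, 1)) -
      ed (fderiv ℝ x q (1, 0)) (fderiv ℝ x q (0, 1)) ^ 2 := fun q hq =>
    det_pos (hind2 q hq)
  -- D x maps W to T on Ω
  have hLW : ∀ q ∈ Ω, fderiv ℝ x q (Wfun x T q) = T q := by
    intro q hq
    obtain ⟨a, b, hab⟩ := hTspan q hq
    have hc := cramer hab (hdt q hq).ne'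
    have hW : Wfun x T q = (a, b) := by
      rw [Wfun]
      exact Prod.ext hc.1 hc.2
    rw [hW]
    have h : ((a, b) : ℝ × ℝ) = a • ((1 : ℝ), (0 : ℝ)) + b • ((0 : ℝ), (1 : ℝ)) := by
      simp [Prod.ext_iff]
    rw [h, map_add, map_smul, map_smul, ← hab]
  -- smoothness of W at p
  have hx'A : ContDiffAt ℝ 1 (fun r => fderiv ℝ x r) p := hx'C.contDiffAt (hmem p hp)
  have hxuC : ContDiffAt ℝ 1 (fun q => fderiv ℝ x q (1, 0)) p := hx'A.clm_apply contDiffAt_const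
  have hxvC : ContDiffAt ℝ 1 (fun q => fderiv ℝ x q (0, 1)) p := hx'A.clm_apply contDiffAt_const
  have hTC : ContDiffAt ℝ 1 T p := by
    rw [hTdef]
    exact contDiffAt_const.sub (((hξ.contDiffAt (hmem p hp)).of_le (by simp)).const_smul _)
  have hcomp : ∀ f : ℝ × ℝ → Fin 3 → ℝ, ContDiffAt ℝ 1 f p → ∀ i : Fin 3,
      ContDiffAt ℝ 1 (fun q => f q i) p := fun f hf i =>
    ((ContinuousLinearMap.proj (R := ℝ) (φ := fun _ : Fin 3 => ℝ) i).contDiff.contDiffAt).comp p hf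
  have hedC : ∀ f g : ℝ × ℝ → Fin 3 → ℝ, ContDiffAt ℝ 1 f p → ContDiffAt ℝ 1 g p →
      ContDiffAt ℝ 1 (fun q => ed (f q) (g q)) p := by
    intro f g hf hg
    simp only [ed]
    exact (((hcomp f hf 0).mul (hcomp g hg 0)).add
      ((hcomp f hf 1).mul (hcomp g hg 1))).add ((hcomp f hf 2).mul (hcomp g hg 2))
  have hWC : ContDiffAt ℝ 1 (Wfun x T) p := by
    have hdtC : ContDiffAt ℝ 1 (fun q =>
        ed (fderiv ℝ x q (1, 0)) (fderiv ℝ x q (1, 0)) *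
          ed (fderiv ℝ x q (0, 1)) (fderiv ℝ x q (0, 1)) -
          ed (fderiv ℝ x q (1, 0)) (fderiv ℝ x q (0, 1)) ^ 2) p :=
      ((hedC _ _ hxuC hxuC).mul (hedC _ _ hxvC hxvC)).sub ((hedC _ _ hxuC hxvC).pow 2)
    unfold Wfun
    apply ContDiffAt.prodMk
    · exact (((hedC _ _ hxvC hxvC).mul (hedC _ _ hxuC hTC)).sub
        ((hedC _ _ hxuC hxvC).mul (hedC _ _ hxvC hTC))).div hdtC (hdt p hp).ne'
    · exact (((hedC _ _ hxuC hxuC).mul (hedC _ _ hxvC hTC)).sub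
        ((hedC _ _ hxuC hxvC).mul (hedC _ _ hxuC hTC))).div hdtC (hdt p hp).ne'
  -- solve the ODE
  obtain ⟨γ, hγ0, ε₀, hε₀, hγd⟩ := hWC.exists_forall_mem_closedBall_exists_eq_forall_mem_Ioo_hasDerivAt₀ (0 : ℝ)
  have h0mem : (0 : ℝ) ∈ Set.Ioo (0 - ε₀) (0 + ε₀) := by
    rw [zero_sub, zero_add]; exact ⟨neg_lt_zero.mpr hε₀, hε₀⟩
  have hcont : ContinuousAt γ 0 := (hγd 0 h0mem).continuousAt
  have hpre : γ ⁻¹' Ω ∈ nhds (0 : ℝ) := hcont.preimage_mem_nhds (by rw [hγ0]; exact hmem p hp)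
  obtain ⟨δ, hδpos, hball⟩ := Metric.mem_nhds_iff.mp hpre
  set ε := min ε₀ δ with hεdef
  have hεpos : 0 < ε := lt_min hε₀ hδpos
  have hγΩ : ∀ t ∈ Set.Ioo (-ε) ε, γ t ∈ Ω := by
    intro t ht
    apply hball
    rw [Metric.mem_ball, Real.dist_eq, sub_zero]
    rw [abs_lt]
    constructor
    · have : -δ ≤ -ε := neg_le_neg (min_le_right ε₀ δ)
      linarith [ht.1]
    · linarith [ht.2, min_le_right ε₀ δ]
  have hγd' : ∀ t ∈ Set.Ioo (-ε) ε, HasDerivAt γ (Wfun x T (γ t)) t := by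
    intro t ht
    apply hγd t
    rw [zero_sub, zero_add]
    constructor
    · have : -ε₀ ≤ -ε := neg_le_neg (min_le_left ε₀ δ)
      linarith [ht.1]
    · linarith [ht.2, min_le_left ε₀ δ]
  -- ξ ∘ γ is constant
  have hgd : ∀ t ∈ Set.Ioo (-ε) ε, HasDerivAt (fun r => ξ (γ r)) 0 t := by
    intro t ht
    have hq := hγΩ t ht
    have h1 := (hξD _ hq).comp_hasDerivAt t (hγd' t ht)
    rwa [hkey _ hq _ (hLW _ hq)] at h1
  have hgconst := const_of_deriv_zero hεpos hgd
  have hξγ : ∀ t ∈ Set.Ioo (-ε) ε, ξ (γ t) = ξ p := by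
    intro t ht
    have := hgconst t ht
    simpa [hγ0] using this
  -- x ∘ γ is a straight line
  have hfd : ∀ t ∈ Set.Ioo (-ε) ε, HasDerivAt (fun r => x (γ r) - r • T p) 0 t := by
    intro t ht
    have hq := hγΩ t ht
    have h1 : HasDerivAt (fun r => x (γ r)) (T (γ t)) t := by
      have h2 := (hxD _ hq).comp_hasDerivAt t (hγd' t ht)
      rwa [hLW _ hq] at h2
    have hTt : T (γ t) = T p := by
      rw [hTdef]
      simp only [hξγ t ht]
    rw [hTt] at h1
    have h3 : HasDerivAt (fun r : ℝ => r • T p) ((1 : ℝ) • T p) t :=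
      (hasDerivAt_id t).smul_const (T p)
    have h4 := h1.sub h3
    simpa using (show HasDerivAt (fun r => x (γ r) - r • T p) (T p - (1 : ℝ) • T p) t from h4)
  have hfconst := const_of_deriv_zero hεpos hfd
  -- the direction of the ruling
  have hmlUξ : ml U (ξ p) = -Real.cosh θ := by rw [ml_symm]; exact hangle p hp
  have hdT : U + ml U (ξ p) • ξ p = T p := by
    rw [hTdef, hmlUξ]
    simp only [neg_smul]
    rw [sub_eq_add_neg]
  have hcosh : 1 < Real.cosh θ := by
    rcases lt_or_eq_of_le hθ0 with h | h
    · calc (1 : ℝ) = Real.cosh 0 := by simp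
      _ < Real.cosh θ := by
        apply Real.cosh_lt_cosh.mpr
        simpa [abs_of_nonneg hθ0] using h
    · exact absurd h.symm hθ
  have hmldd : ml (T p) (T p) = Real.cosh θ ^ 2 - 1 := by
    rw [hTdef]
    simp only []
    rw [ml_expand, hU, hmlUξ, hunit p hp]
    ring
  have hd0 : U + ml U (ξ p) • ξ p ≠ 0 := by
    intro h
    rw [hdT] at h
    rw [h] at hmldd
    simp [ml] at hmldd
    nlinarith
  refine ⟨U + ml U (ξ p) • ξ p, hd0, ⟨1, (one_smul _ _).symm⟩, ε, hεpos, ?_⟩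
  intro s hs
  refine ⟨γ s, hγΩ s hs, ?_⟩
  have h5 := hfconst s hs
  simp only [hγ0, zero_smul, sub_zero] at h5
  rw [hdT]
  exact sub_eq_iff_eq_add.mp h5
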